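/- arXiv:2210.06248 — 3 statements merged into one kernel-verified Lean document; each statement's English description precedes it below -/
import Mathlib

section
/- Let Γ be a lattice in ℝⁿ (the ℤ-span of a basis of ℝⁿ) and let T be an orthogonal transformation such that Γ ∩ TΓ has finite index in Γ. Then the matrix of T with respect to a lattice basis of Γ has all entries rational. -/
/-!
If `Γ ∩ TΓ` has finite index in `Γ`, then some positive multiple of every `x ∈ Γ` lies in `TΓ`,
so `T` maps the `ℚ`-span `V` of `Γ` onto a space containing `V`. Since `V` is finite dimensional
and `T` is injective, this forces `T V = V`; the matrix of `T` in a basis of `Γ`, which is also a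
`ℚ`-basis of `V`, is therefore rational.
-/

noncomputable section

abbrev En (n : ℕ) := EuclideanSpace ℝ (Fin n)

/-- The lattice generated by a basis: all integer linear combinations. -/
def lattB {n : ℕ} (b : Module.Basis (Fin n) ℝ (En n)) : AddSubgroup (En n) :=
  (Submodule.span ℤ (Set.range ⇑b)).toAddSubgroup

/-- `T` is a coincidence isometry of `Γ`: `Γ ∩ TΓ` has finite index in `Γ`. -/
def CI {n : ℕ} (Γ : AddSubgroup (En n)) (T : En n ≃ₗᵢ[ℝ] En n) : Prop :=
  (Γ ⊓ Γ.map T.toLinearEquiv.toLinearMap.toAddMonoidHom).relIndex Γ ≠ 0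

open Submodule

theorem AddSubgroup.span_rat_le_map_of_relIndex_ne_zero {E : Type*} [AddCommGroup E] [Module ℚ E]
    {Γ : AddSubgroup E} {f : E →+ E} (h : (Γ ⊓ Γ.map f).relIndex Γ ≠ 0) :
    span ℚ (Γ : Set E) ≤ (span ℚ (Γ : Set E)).map f.toRatLinearMap := by
  refine span_le.2 fun x hx => ?_
  obtain ⟨m, hm, -, hmx⟩ := AddSubgroup.exists_nsmul_mem_of_relIndex_ne_zero h hx
  obtain ⟨y, hyΓ, hy⟩ := (AddSubgroup.mem_inf.1 (AddSubgroup.mem_inf.1 hmx).1).2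
  refine ⟨(m : ℚ)⁻¹ • y, smul_mem _ _ (subset_span hyΓ), ?_⟩
  have hm' : (m : ℚ) ≠ 0 := by exact_mod_cast hm.ne'
  rw [map_smul, AddMonoidHom.coe_toRatLinearMap, hy, ← Nat.cast_smul_eq_nsmul ℚ, smul_smul,
    inv_mul_cancel₀ hm', one_smul]

theorem Submodule.map_eq_of_le_map {K E : Type*} [DivisionRing K] [AddCommGroup E] [Module K E]
    {V : Submodule K E} [FiniteDimensional K V] {g : E →ₗ[K] E} (hg : Function.Injective g)
    (h : V ≤ V.map g) : V.map g = V :=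
  (eq_of_le_of_finrank_eq h (equivMapOfInjective g hg V).finrank_eq).symm

theorem stmt_0 {n : ℕ} (b : Module.Basis (Fin n) ℝ (En n)) (T : En n ≃ₗᵢ[ℝ] En n)
    (hT : CI (lattB b) T) :
    ∀ i j, ∃ q : ℚ, b.repr (T (b j)) i = (q : ℝ) := by
  intro i j
  set V := span ℚ (Set.range b)
  have hΓV : span ℚ (lattB b : Set (En n)) = V := span_span_of_tower ℤ ℚ _
  have : FiniteDimensional ℚ V := FiniteDimensional.span_of_finite ℚ (Set.finite_range b)
  set g := T.toLinearEquiv.toLinearMap.toAddMonoidHom.toRatLinearMap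
  have hTV : V.map g = V :=
    map_eq_of_le_map T.injective (hΓV ▸ AddSubgroup.span_rat_le_map_of_relIndex_ne_zero hT)
  have hTbj : T (b j) ∈ V := hTV ▸ mem_map_of_mem (subset_span ⟨j, rfl⟩)
  obtain ⟨q, hq⟩ := (b.mem_span_iff_repr_mem ℚ _).1 hTbj i
  exact ⟨q, hq.symm⟩
end
end

section
/- Let Γ be a lattice in ℝⁿ with basis {a₁,…,aₙ} and T an orthogonal transformation whose matrix with respect to this basis has all entries rational. Then Γ ∩ TΓ has finite index in Γ, i.e., T is a coincidence isometry of Γ. -/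
/-! The matrix of `T⁻¹` is the inverse of a rational matrix, hence rational, so every `T⁻¹ aⱼ` has
a nonzero integer multiple in `Γ`, i.e. every `aⱼ` has one in `TΓ`. Then `Γ / (Γ ∩ TΓ)` is a
finitely generated abelian torsion group, hence finite. -/

noncomputable section

namespace AddSubgroup

variable {G : Type*} [AddCommGroup G]

def saturation (H : AddSubgroup G) : AddSubgroup G :=
  (AddCommGroup.torsion (G ⧸ H)).comap (QuotientAddGroup.mk' H)

theorem mem_saturation {H : AddSubgroup G} {x : G} :
    x ∈ H.saturation ↔ ∃ n : ℕ, 0 < n ∧ n • x ∈ H := by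
  simp only [saturation, mem_comap, AddCommGroup.mem_torsion, isOfFinAddOrder_iff_nsmul_eq_zero,
    QuotientAddGroup.mk'_apply, ← QuotientAddGroup.mk_nsmul, QuotientAddGroup.eq_zero_iff]

theorem map_mem_saturation_map {G' : Type*} [AddCommGroup G'] (f : G →+ G')
    {H : AddSubgroup G} {x : G} (hx : x ∈ H.saturation) : f x ∈ (H.map f).saturation := by
  obtain ⟨n, hn, hnx⟩ := mem_saturation.mp hx
  exact mem_saturation.mpr ⟨n, hn, map_nsmul f n x ▸ mem_map_of_mem f hnx⟩

theorem relIndex_ne_zero_of_le_saturation {H K : AddSubgroup G} [AddGroup.FG K]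
    (hK : K ≤ H.saturation) : H.relIndex K ≠ 0 := by
  have : IsAddTorsion (K ⧸ H.addSubgroupOf K) := by
    intro g
    induction g using QuotientAddGroup.induction_on with | H y => ?_
    obtain ⟨n, hn, hny⟩ := mem_saturation.mp (hK y.2)
    refine isOfFinAddOrder_iff_nsmul_eq_zero.mpr ⟨n, hn, ?_⟩
    rw [← QuotientAddGroup.mk_nsmul, QuotientAddGroup.eq_zero_iff, mem_addSubgroupOf]
    exact hny
  have := AddCommGroup.finite_of_fg_isAddTorsion _ this
  exact index_ne_zero_of_finite

end AddSubgroup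

section RationalCoordinates

variable {K V ι : Type*} [Field K] [CharZero K] [AddCommGroup V] [Module K V]

theorem ratCast_smul_mem_saturation {H : AddSubgroup V} {v : V} (hv : v ∈ H) (q : ℚ) :
    (q : K) • v ∈ H.saturation := by
  refine AddSubgroup.mem_saturation.mpr ⟨q.den, q.pos, ?_⟩
  have hden : q.den • ((q : K) • v) = q.num • v := by
    rw [← Nat.cast_smul_eq_nsmul K, smul_smul, ← Int.cast_smul_eq_zsmul K]
    congr 1
    exact_mod_cast q.den_mul_eq_num
  exact hden ▸ H.zsmul_mem hv q.num

theorem Module.Basis.mem_saturation_span_of_repr_mem_range_ratCast [Fintype ι]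
    (b : Module.Basis ι K V) {x : V} (hx : ∀ i, b.repr x i ∈ Set.range ((↑) : ℚ → K)) :
    x ∈ (Submodule.span ℤ (Set.range b)).toAddSubgroup.saturation := by
  rw [← b.sum_repr x]
  refine AddSubgroup.sum_mem _ fun i _ => ?_
  obtain ⟨q, hq⟩ := hx i
  exact hq ▸ ratCast_smul_mem_saturation (H := (Submodule.span ℤ (Set.range b)).toAddSubgroup)
    (Submodule.subset_span (Set.mem_range_self i)) q

theorem Module.Basis.repr_symm_apply_mem_range_ratCast [Fintype ι] [DecidableEq ι]
    (b : Module.Basis ι K V) (e : V ≃ₗ[K] V)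
    (he : ∀ i j, b.repr (e (b j)) i ∈ Set.range ((↑) : ℚ → K)) (i j : ι) :
    b.repr (e.symm (b j)) i ∈ Set.range ((↑) : ℚ → K) := by
  choose A hA using he
  set Aq : Matrix ι ι ℚ := Matrix.of A
  have hmat : LinearMap.toMatrix b b e = Aq.map (Rat.castHom K) := by
    ext i j
    simp [Aq, LinearMap.toMatrix_apply, hA]
  have hleft : LinearMap.toMatrix b b e.symm * LinearMap.toMatrix b b e = 1 := by
    rw [← LinearMap.toMatrix_comp, LinearEquiv.symm_comp, LinearMap.toMatrix_id]
  have hdet : IsUnit Aq.det := by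
    have := Matrix.isUnit_det_of_left_inverse hleft
    rw [hmat, ← RingHom.mapMatrix_apply, ← RingHom.map_det] at this
    exact isUnit_iff_ne_zero.mpr fun h => by simp [h] at this
  have hinv : Aq⁻¹.map (Rat.castHom K) * LinearMap.toMatrix b b e = 1 := by
    rw [hmat, ← Matrix.map_mul, Matrix.nonsing_inv_mul _ hdet,
      Matrix.map_one _ (map_zero _) (map_one _)]
  have hsymm : LinearMap.toMatrix b b e.symm = Aq⁻¹.map (Rat.castHom K) :=
    (Matrix.inv_eq_left_inv hleft).symm.trans (Matrix.inv_eq_left_inv hinv)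
  refine ⟨Aq⁻¹ i j, ?_⟩
  simpa [LinearMap.toMatrix_apply] using (congrFun (congrFun hsymm i) j).symm

end RationalCoordinates

theorem stmt_1 {n : ℕ} (b : Module.Basis (Fin n) ℝ (En n)) (T : En n ≃ₗᵢ[ℝ] En n)
    (hrat : ∀ i j, ∃ q : ℚ, b.repr (T (b j)) i = (q : ℝ)) :
    CI (lattB b) T := by
  have hΓ : lattB b = AddSubgroup.closure (Set.range b) :=
    Submodule.span_int_eq_addSubgroupClosure _
  have hT : ∀ i j, b.repr (T.toLinearEquiv (b j)) i ∈ Set.range ((↑) : ℚ → ℝ) :=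
    fun i j => (hrat i j).imp fun _ hq => hq.symm
  have : AddGroup.FG (lattB b) := by rw [hΓ]; infer_instance
  rw [CI, AddSubgroup.inf_relIndex_left]
  refine AddSubgroup.relIndex_ne_zero_of_le_saturation ?_
  rw [hΓ, AddSubgroup.closure_le]
  rintro _ ⟨j, rfl⟩
  have hsymm : T.symm (b j) ∈ (lattB b).saturation :=
    b.mem_saturation_span_of_repr_mem_range_ratCast
      (b.repr_symm_apply_mem_range_ratCast T.toLinearEquiv hT · j)
  simpa [hΓ] using
    AddSubgroup.map_mem_saturation_map T.toLinearEquiv.toLinearMap.toAddMonoidHom hsymm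
end
end

section
/- Let Γ and Γ' be commensurate lattices in ℝⁿ (Γ ∩ Γ' has finite index in both). Then for any orthogonal T, T is a coincidence isometry of Γ if and only if T is a coincidence isometry of Γ'. -/
noncomputable section

/-! For an injective endomorphism `f`, `f H` and `f K` are again commensurable. Chaining finite
relative indices along `f K ⇝ f H ⇝ H ⇝ K` then shows that `f K ∩ K` has finite index in `K`
as soon as `f H ∩ H` has finite index in `H`. -/

@[to_additive]
theorem Subgroup.Commensurable.relIndex_map_self_ne_zero {G : Type*} [Group G]
    {H K : Subgroup G} (hHK : H.Commensurable K) {f : G →* G} (hf : Function.Injective f)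
    (hH : (H.map f).relIndex H ≠ 0) : (K.map f).relIndex K ≠ 0 := by
  have hfKfH : (K.map f).relIndex (H.map f) ≠ 0 := by
    rw [Subgroup.relIndex_map_map_of_injective K H hf]
    exact hHK.2
  exact Subgroup.relIndex_ne_zero_trans (Subgroup.relIndex_ne_zero_trans hfKfH hH) hHK.1

@[to_additive]
theorem Subgroup.Commensurable.relIndex_map_self_ne_zero_iff {G : Type*} [Group G]
    {H K : Subgroup G} (hHK : H.Commensurable K) {f : G →* G} (hf : Function.Injective f) :
    (H.map f).relIndex H ≠ 0 ↔ (K.map f).relIndex K ≠ 0 :=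
  ⟨hHK.relIndex_map_self_ne_zero hf, hHK.symm.relIndex_map_self_ne_zero hf⟩

theorem ci_iff_relIndex_map_ne_zero {n : ℕ} (Γ : AddSubgroup (En n)) (T : En n ≃ₗᵢ[ℝ] En n) :
    CI Γ T ↔ (Γ.map T.toLinearEquiv.toLinearMap.toAddMonoidHom).relIndex Γ ≠ 0 := by
  rw [CI, AddSubgroup.inf_relIndex_left]

theorem ci_iff_of_commensurable {n : ℕ} {Γ Γ' : AddSubgroup (En n)} (h : Γ.Commensurable Γ')
    (T : En n ≃ₗᵢ[ℝ] En n) : CI Γ T ↔ CI Γ' T := by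
  rw [ci_iff_relIndex_map_ne_zero, ci_iff_relIndex_map_ne_zero]
  exact h.relIndex_map_self_ne_zero_iff T.injective

theorem stmt_7 {n : ℕ} (b b' : Module.Basis (Fin n) ℝ (En n)) (T : En n ≃ₗᵢ[ℝ] En n)
    (h1 : (lattB b ⊓ lattB b').relIndex (lattB b) ≠ 0)
    (h2 : (lattB b ⊓ lattB b').relIndex (lattB b') ≠ 0) :
    CI (lattB b) T ↔ CI (lattB b') T := by
  rw [AddSubgroup.inf_relIndex_left] at h1
  rw [AddSubgroup.inf_relIndex_right] at h2
  exact ci_iff_of_commensurable ⟨h2, h1⟩ T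
end
end
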